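/- Let (Ψ_k) be harmonic maps R² → S² given stereographically by Ψ_k = Φ∘f_k with f_k(z) = (z + z_k - a_k)/(z + z_k + a_k), z_k ∈ C, a_k > 0, and suppose R_k → 0, |z_k|/R_k → s ∈ [0,∞), a_k/R_k → a ∈ (0,∞). Then for every ρ > 0, lim_{L→∞} lim_{k→∞} ∫_{D_ρ \ D_{R_k L}} (1/2)|∇Ψ_k|² dz = 0. -/

import Mathlib

/-!
Away from the pole of `f(z) = (z + z₀ - a)/(z + z₀ + a)`, conformality of `f` and of the inverse
stereographic projection `Φ` gives `|∇(Φ ∘ f)|² = |f'|² · 8/(1 + |f|²)² = 8a²/(|z + z₀|² + a²)²`.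
The substitution `z = uζ`, with `|u| = R_k` and `u` pointing along `z_k`, turns the energy on
`D_ρ \ D_{R_k L}` into the energy of the bubble with centre `|z_k|/R_k` and scale `a_k/R_k` on
`D_{ρ/R_k} \ D_L`. These rescaled densities converge to the bubble with centre `s` and scale `a`
under the common integrable majorant `C (1 + |ζ|)⁻⁴`, so by dominated convergence the inner
limit is the energy `g(L)` of that bubble outside `D_L`, and `g(L) → 0` because its total energy
is finite.
-/

open MeasureTheory Filter Topology

noncomputable def pd1 (f : ℂ → ℝ) (z : ℂ) : ℝ := fderiv ℝ f z 1

noncomputable def pd2 (f : ℂ → ℝ) (z : ℂ) : ℝ := fderiv ℝ f z Complex.I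

/-- The Möbius map `f(z) = (z + z₀ - a)/(z + z₀ + a)`. -/
noncomputable def fmob (z0 : ℂ) (a : ℝ) (z : ℂ) : ℂ :=
  (z + z0 - (a : ℂ)) / (z + z0 + (a : ℂ))

/-- Components of `Ψ = Φ ∘ f` with `Φ` the inverse stereographic projection. -/
noncomputable def Psi1 (z0 : ℂ) (a : ℝ) (z : ℂ) : ℝ :=
  2 * (fmob z0 a z).re / (Complex.normSq (fmob z0 a z) + 1)

noncomputable def Psi2 (z0 : ℂ) (a : ℝ) (z : ℂ) : ℝ :=
  2 * (fmob z0 a z).im / (Complex.normSq (fmob z0 a z) + 1)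

noncomputable def Psi3 (z0 : ℂ) (a : ℝ) (z : ℂ) : ℝ :=
  (Complex.normSq (fmob z0 a z) - 1) / (Complex.normSq (fmob z0 a z) + 1)

/-- `|∇Ψ|²` for the harmonic bubble `Ψ = Φ ∘ f`. -/
noncomputable def PsiGradSq (z0 : ℂ) (a : ℝ) (z : ℂ) : ℝ :=
  (pd1 (Psi1 z0 a) z) ^ 2 + (pd2 (Psi1 z0 a) z) ^ 2 +
    (pd1 (Psi2 z0 a) z) ^ 2 + (pd2 (Psi2 z0 a) z) ^ 2 +
    (pd1 (Psi3 z0 a) z) ^ 2 + (pd2 (Psi3 z0 a) z) ^ 2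

open Metric

theorem fderiv_comp_apply_of_hasDerivAt {F : ℂ → ℝ} {g : ℂ → ℂ} {z d : ℂ}
    (hF : DifferentiableAt ℝ F (g z)) (hg : HasDerivAt g d z) (v : ℂ) :
    fderiv ℝ (F ∘ g) z v = fderiv ℝ F (g z) (v * d) := by
  rw [(hF.hasFDerivAt.comp z (hg.hasFDerivAt.restrictScalars ℝ)).fderiv]
  simp

theorem fderiv_apply_eq_re_mul_pd1_add_im_mul_pd2 (F : ℂ → ℝ) (w v : ℂ) :
    fderiv ℝ F w v = v.re * pd1 F w + v.im * pd2 F w := by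
  have hv : v = v.re • (1 : ℂ) + v.im • Complex.I := by simp
  conv_lhs => rw [hv, map_add, map_smul, map_smul]
  rfl

theorem pd1_sq_add_pd2_sq_comp {F : ℂ → ℝ} {g : ℂ → ℂ} {z d : ℂ}
    (hF : DifferentiableAt ℝ F (g z)) (hg : HasDerivAt g d z) :
    pd1 (F ∘ g) z ^ 2 + pd2 (F ∘ g) z ^ 2 =
      Complex.normSq d * (pd1 F (g z) ^ 2 + pd2 F (g z) ^ 2) := by
  rw [pd1, pd2, fderiv_comp_apply_of_hasDerivAt hF hg, fderiv_comp_apply_of_hasDerivAt hF hg,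
    fderiv_apply_eq_re_mul_pd1_add_im_mul_pd2 F (g z),
    fderiv_apply_eq_re_mul_pd1_add_im_mul_pd2 F (g z), Complex.normSq_apply]
  simp only [one_mul, Complex.mul_re, Complex.mul_im, Complex.I_re, Complex.I_im]
  ring

theorem HasFDerivAt.div {𝕜 E : Type*} [NontriviallyNormedField 𝕜] [NormedAddCommGroup E]
    [NormedSpace 𝕜 E] {u N : E → 𝕜} {u' N' : E →L[𝕜] 𝕜} {w : E}
    (hu : HasFDerivAt u u' w) (hN : HasFDerivAt N N' w) (hw : N w ≠ 0) :
    HasFDerivAt (fun z => u z / N z) ((N w ^ 2)⁻¹ • (N w • u' - u w • N')) w := by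
  have h := hu.mul ((hasFDerivAt_inv hw).comp w hN)
  refine (h.congr_fderiv ?_).congr_of_eventuallyEq
    (Eventually.of_forall fun z => div_eq_mul_inv (u z) (N z))
  ext v
  simp only [Function.comp_apply, add_apply, smul_apply, sub_apply,
    ContinuousLinearMap.comp_apply, ContinuousLinearMap.toSpanSingleton_apply, smul_eq_mul]
  field_simp
  ring

theorem hasFDerivAt_normSq (w : ℂ) :
    HasFDerivAt (fun z => Complex.normSq z)
      ((2 * w.re) • Complex.reCLM + (2 * w.im) • Complex.imCLM) w := by
  have h := (Complex.reCLM.hasFDerivAt.mul Complex.reCLM.hasFDerivAt).add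
    (Complex.imCLM.hasFDerivAt.mul Complex.imCLM.hasFDerivAt) (x := w)
  refine (h.congr_fderiv ?_).congr_of_eventuallyEq
    (Eventually.of_forall fun z => Complex.normSq_apply z)
  ext v
  simp only [Complex.reCLM_apply, Complex.imCLM_apply, add_apply, smul_apply, smul_eq_mul]
  ring

theorem normSq_add_one_pos (w : ℂ) : 0 < Complex.normSq w + 1 := by
  linarith [Complex.normSq_nonneg w]

theorem map_volume_mul_left {u : ℂ} (hu : u ≠ 0) :
    Measure.map (u * ·) (volume : Measure ℂ) = ENNReal.ofReal (Complex.normSq u)⁻¹ • volume := by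
  have hdet : LinearMap.det (LinearMap.mulLeft ℝ u) = Complex.normSq u := by
    rw [← Algebra.norm_complex_apply, Algebra.norm_apply]; rfl
  have := Measure.map_linearMap_addHaar_eq_smul_addHaar (volume : Measure ℂ)
    (f := LinearMap.mulLeft ℝ u) (by rw [hdet]; exact Complex.normSq_eq_zero.not.mpr hu)
  rwa [hdet, abs_of_nonneg (inv_nonneg.mpr (Complex.normSq_nonneg u))] at this

theorem setIntegral_preimage_mul_left {E : Type*} [NormedAddCommGroup E] [NormedSpace ℝ E]
    (f : ℂ → E) {u : ℂ} (hu : u ≠ 0) (s : Set ℂ) :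
    ∫ z in (u * ·) ⁻¹' s, f (u * z) = (Complex.normSq u)⁻¹ • ∫ z in s, f z := by
  have := setIntegral_map_equiv (μ := volume) (Homeomorph.mulLeft₀ u hu).toMeasurableEquiv f s
  simp only [Homeomorph.toMeasurableEquiv_coe, Homeomorph.coe_mulLeft₀] at this
  rw [← this, map_volume_mul_left hu, Measure.restrict_smul, integral_smul_measure,
    ENNReal.toReal_ofReal (inv_nonneg.mpr (Complex.normSq_nonneg u))]

theorem preimage_mul_left_ball_zero {u : ℂ} (hu : u ≠ 0) (r : ℝ) :
    (u * ·) ⁻¹' ball (0 : ℂ) r = ball 0 (r / ‖u‖) := by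
  ext z
  simp [lt_div_iff₀ (norm_pos_iff.mpr hu), mul_comm]

theorem exists_norm_eq_and_div_eq_ofReal_norm_div (c : ℂ) {R : ℝ} (hR : 0 < R) :
    ∃ u : ℂ, ‖u‖ = R ∧ c / u = ((‖c‖ / R : ℝ) : ℂ) := by
  refine ⟨R * Complex.exp (c.arg * Complex.I), ?_, ?_⟩
  · rw [norm_mul, Complex.norm_exp_ofReal_mul_I, mul_one, Complex.norm_of_nonneg hR.le]
  · have hR' : (R : ℂ) ≠ 0 := Complex.ofReal_ne_zero.mpr hR.ne'
    rw [div_eq_iff (mul_ne_zero hR' (Complex.exp_ne_zero _))]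
    push_cast
    field_simp
    exact (Complex.norm_mul_exp_arg_mul_I c).symm

theorem integrable_div_one_add_norm_pow_four (C : ℝ) :
    Integrable (fun ζ : ℂ => C / (1 + ‖ζ‖) ^ 4) := by
  have h := (integrable_one_add_norm (E := ℂ) (μ := volume) (r := 4)
    (by rw [Complex.finrank_real_complex]; norm_num)).const_mul C
  refine h.congr (Eventually.of_forall fun ζ => ?_)
  simp only [Real.rpow_neg (by positivity : (0 : ℝ) ≤ 1 + ‖ζ‖), div_eq_mul_inv]
  norm_cast

theorem tendsto_setIntegral_of_dominated_of_eventually_mem_iff {α ι E : Type*}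
    [MeasurableSpace α] [NormedAddCommGroup E] [NormedSpace ℝ E] {μ : Measure α} {l : Filter ι}
    [l.IsCountablyGenerated] {F : ι → α → E} {f : α → E} {G : α → ℝ} {s : ι → Set α}
    {t : Set α} (hs : ∀ k, MeasurableSet (s k)) (ht : MeasurableSet t)
    (hF : ∀ᶠ k in l, AEStronglyMeasurable (F k) μ) (hG : Integrable G μ)
    (h_bound : ∀ᶠ k in l, ∀ᵐ x ∂μ, ‖F k x‖ ≤ G x)
    (h_lim : ∀ x ∈ t, Tendsto (fun k => F k x) l (𝓝 (f x)))
    (h_mem : ∀ x, ∀ᶠ k in l, x ∈ s k ↔ x ∈ t) :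
    Tendsto (fun k => ∫ x in s k, F k x ∂μ) l (𝓝 (∫ x in t, f x ∂μ)) := by
  simp only [← integral_indicator (hs _), ← integral_indicator ht]
  refine tendsto_integral_filter_of_dominated_convergence G ?_ ?_ hG (ae_of_all _ fun x => ?_)
  · filter_upwards [hF] with k hk using hk.indicator (hs k)
  · filter_upwards [h_bound] with k hk
    filter_upwards [hk] with x hx using (norm_indicator_le_norm_self _ _).trans hx
  · by_cases hx : x ∈ t
    · rw [Set.indicator_of_mem hx]
      refine (h_lim x hx).congr' ?_
      filter_upwards [h_mem x] with k hk
      rw [Set.indicator_of_mem (hk.mpr hx)]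
    · rw [Set.indicator_of_notMem hx]
      refine tendsto_const_nhds.congr' ?_
      filter_upwards [h_mem x] with k hk
      rw [Set.indicator_of_notMem (mt hk.mp hx)]

theorem tendsto_setIntegral_compl_ball_atTop {α E : Type*} [PseudoMetricSpace α]
    [MeasurableSpace α] [OpensMeasurableSpace α] [NormedAddCommGroup E] [NormedSpace ℝ E]
    {μ : Measure α} {f : α → E} (hf : Integrable f μ) (x : α) :
    Tendsto (fun L => ∫ z in (ball x L)ᶜ, f z ∂μ) atTop (𝓝 0) := by
  have h := tendsto_setIntegral_of_antitone (μ := μ) (s := fun L : ℝ => (ball x L)ᶜ)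
    (fun L => measurableSet_ball.compl)
    (fun L₁ L₂ h => Set.compl_subset_compl.mpr (ball_subset_ball h)) ⟨0, hf.integrableOn⟩
  have hempty : ⋂ L : ℝ, (ball x L)ᶜ = ∅ :=
    Set.iInter_eq_empty_iff.mpr fun z => ⟨dist z x + 1, by simp⟩
  simpa [hempty] using h

noncomputable def invStereo1 (w : ℂ) : ℝ := 2 * w.re / (Complex.normSq w + 1)

noncomputable def invStereo2 (w : ℂ) : ℝ := 2 * w.im / (Complex.normSq w + 1)

noncomputable def invStereo3 (w : ℂ) : ℝ := (Complex.normSq w - 1) / (Complex.normSq w + 1)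

theorem differentiable_invStereo1 : Differentiable ℝ invStereo1 := fun w =>
  ((Complex.reCLM.hasFDerivAt.const_mul 2).div ((hasFDerivAt_normSq w).add_const 1)
    (normSq_add_one_pos w).ne').differentiableAt

theorem differentiable_invStereo2 : Differentiable ℝ invStereo2 := fun w =>
  ((Complex.imCLM.hasFDerivAt.const_mul 2).div ((hasFDerivAt_normSq w).add_const 1)
    (normSq_add_one_pos w).ne').differentiableAt

theorem differentiable_invStereo3 : Differentiable ℝ invStereo3 := fun w =>
  (((hasFDerivAt_normSq w).sub_const 1).div ((hasFDerivAt_normSq w).add_const 1)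
    (normSq_add_one_pos w).ne').differentiableAt

theorem pd_sq_sum_invStereo_eq (w : ℂ) :
    (pd1 invStereo1 w ^ 2 + pd2 invStereo1 w ^ 2) + (pd1 invStereo2 w ^ 2 + pd2 invStereo2 w ^ 2)
      + (pd1 invStereo3 w ^ 2 + pd2 invStereo3 w ^ 2) = 8 / (Complex.normSq w + 1) ^ 2 := by
  have hN := (hasFDerivAt_normSq w).add_const 1
  have hN0 := (normSq_add_one_pos w).ne'
  have h1 : HasFDerivAt invStereo1 _ w := (Complex.reCLM.hasFDerivAt.const_mul 2).div hN hN0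
  have h2 : HasFDerivAt invStereo2 _ w := (Complex.imCLM.hasFDerivAt.const_mul 2).div hN hN0
  have h3 : HasFDerivAt invStereo3 _ w := ((hasFDerivAt_normSq w).sub_const 1).div hN hN0
  simp only [pd1, pd2, h1.fderiv, h2.fderiv, h3.fderiv, smul_apply, sub_apply, add_apply,
    Complex.reCLM_apply, Complex.imCLM_apply, Complex.one_re, Complex.one_im, Complex.I_re,
    Complex.I_im, smul_eq_mul, Complex.normSq_apply]
  field_simp
  ring

theorem hasDerivAt_fmob {z0 z : ℂ} {a : ℝ} (h : z + z0 + a ≠ 0) :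
    HasDerivAt (fmob z0 a) (2 * a / (z + z0 + a) ^ 2) z := by
  have h1 : HasDerivAt (fun z : ℂ => z + z0 - a) 1 z := ((hasDerivAt_id z).add_const z0).sub_const _
  have h2 : HasDerivAt (fun z : ℂ => z + z0 + a) 1 z := ((hasDerivAt_id z).add_const z0).add_const _
  exact (h1.fun_div h2 h).congr_deriv (by ring)

noncomputable def bubbleDensity (c : ℂ) (b : ℝ) (ζ : ℂ) : ℝ :=
  4 * b ^ 2 / (Complex.normSq (ζ + c) + b ^ 2) ^ 2

theorem psiGradSq_eq_two_mul_bubbleDensity {z0 z : ℂ} {a : ℝ} (h : z + z0 + a ≠ 0) :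
    PsiGradSq z0 a z = 2 * bubbleDensity z0 a z := by
  have hd := hasDerivAt_fmob h
  have hsplit : PsiGradSq z0 a z =
      (pd1 (invStereo1 ∘ fmob z0 a) z ^ 2 + pd2 (invStereo1 ∘ fmob z0 a) z ^ 2) +
      (pd1 (invStereo2 ∘ fmob z0 a) z ^ 2 + pd2 (invStereo2 ∘ fmob z0 a) z ^ 2) +
      (pd1 (invStereo3 ∘ fmob z0 a) z ^ 2 + pd2 (invStereo3 ∘ fmob z0 a) z ^ 2) := by
    rw [PsiGradSq, show Psi1 z0 a = invStereo1 ∘ fmob z0 a from rfl,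
      show Psi2 z0 a = invStereo2 ∘ fmob z0 a from rfl,
      show Psi3 z0 a = invStereo3 ∘ fmob z0 a from rfl]
    ring
  rw [hsplit, pd1_sq_add_pd2_sq_comp (differentiable_invStereo1 _) hd,
    pd1_sq_add_pd2_sq_comp (differentiable_invStereo2 _) hd,
    pd1_sq_add_pd2_sq_comp (differentiable_invStereo3 _) hd, ← mul_add, ← mul_add,
    pd_sq_sum_invStereo_eq, fmob, bubbleDensity]
  set w := z + z0
  have hA : Complex.normSq (w + a) ≠ 0 := Complex.normSq_eq_zero.not.mpr h
  have hS : Complex.normSq w + a ^ 2 ≠ 0 := by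
    intro h0
    have hw : w = 0 := Complex.normSq_eq_zero.mp (by nlinarith [Complex.normSq_nonneg w])
    have ha : a = 0 := by nlinarith [Complex.normSq_nonneg w]
    simp [hw, ha] at h
  have hpar : Complex.normSq (w - a) + Complex.normSq (w + a) = 2 * (Complex.normSq w + a ^ 2) := by
    simp only [Complex.normSq_apply, Complex.add_re, Complex.add_im, Complex.sub_re,
      Complex.sub_im, Complex.ofReal_re, Complex.ofReal_im]
    ring
  rw [Complex.normSq_div, Complex.normSq_div, map_pow, Complex.normSq_mul, Complex.normSq_ofReal,
    div_add_one hA, hpar, Complex.normSq_ofNat]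
  field_simp
  ring

theorem half_psiGradSq_ae_eq (z0 : ℂ) (a : ℝ) :
    (fun z => 1 / 2 * PsiGradSq z0 a z) =ᵐ[volume] bubbleDensity z0 a := by
  filter_upwards [(Set.countable_singleton (-z0 - a)).ae_notMem volume] with z hz
  have hpole : z + z0 + a ≠ 0 := fun h => hz (Set.mem_singleton_iff.mpr (by linear_combination h))
  rw [psiGradSq_eq_two_mul_bubbleDensity hpole]
  ring

theorem measurable_bubbleDensity (c : ℂ) (b : ℝ) : Measurable (bubbleDensity c b) := by
  unfold bubbleDensity
  fun_prop

theorem bubbleDensity_nonneg (c : ℂ) (b : ℝ) (ζ : ℂ) : 0 ≤ bubbleDensity c b ζ := by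
  unfold bubbleDensity; positivity

theorem bubbleDensity_mul_left {u : ℂ} (hu : u ≠ 0) (c : ℂ) (b : ℝ) (ζ : ℂ) :
    bubbleDensity c b (u * ζ) = (Complex.normSq u)⁻¹ * bubbleDensity (c / u) (b / ‖u‖) ζ := by
  have hn : Complex.normSq u ≠ 0 := Complex.normSq_eq_zero.not.mpr hu
  have hmul : u * ζ + c = u * (ζ + c / u) := by field_simp
  rw [bubbleDensity, bubbleDensity, hmul, Complex.normSq_mul, div_pow b, Complex.sq_norm,
    show Complex.normSq (ζ + c / u) + b ^ 2 / Complex.normSq u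
      = (Complex.normSq u * Complex.normSq (ζ + c / u) + b ^ 2) / Complex.normSq u by
        field_simp]
  field_simp

theorem setIntegral_annulus_bubbleDensity_rescale (c : ℂ) (b : ℝ) {R : ℝ} (hR : 0 < R)
    (r₁ r₂ : ℝ) :
    ∫ z in ball 0 r₁ \ ball 0 r₂, bubbleDensity c b z =
      ∫ ζ in ball 0 (r₁ / R) \ ball 0 (r₂ / R), bubbleDensity (‖c‖ / R : ℝ) (b / R) ζ := by
  obtain ⟨u, hu_norm, hu_div⟩ := exists_norm_eq_and_div_eq_ofReal_norm_div c hR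
  have hu : u ≠ 0 := norm_pos_iff.mp (hu_norm ▸ hR)
  have hn : Complex.normSq u ≠ 0 := Complex.normSq_eq_zero.not.mpr hu
  have := setIntegral_preimage_mul_left (bubbleDensity c b) hu (ball 0 r₁ \ ball 0 r₂)
  rw [Set.preimage_sdiff, preimage_mul_left_ball_zero hu, preimage_mul_left_ball_zero hu,
    hu_norm] at this
  simp only [bubbleDensity_mul_left hu, hu_div, hu_norm, integral_const_mul, smul_eq_mul] at this
  rw [← mul_right_inj' (inv_ne_zero hn), ← this]

theorem setIntegral_annulus_half_psiGradSq (z0 : ℂ) (a : ℝ) {R : ℝ} (hR : 0 < R) (ρ L : ℝ) :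
    ∫ z in ball 0 ρ \ ball 0 (R * L), 1 / 2 * PsiGradSq z0 a z =
      ∫ ζ in ball 0 (ρ / R) \ ball 0 L, bubbleDensity (‖z0‖ / R : ℝ) (a / R) ζ := by
  rw [integral_congr_ae (ae_restrict_of_ae (half_psiGradSq_ae_eq z0 a)),
    setIntegral_annulus_bubbleDensity_rescale z0 a hR, mul_div_cancel_left₀ L hR.ne']

theorem exists_bubbleDensity_le {b₀ : ℝ} (hb₀ : 0 < b₀) (b₁ T : ℝ) :
    ∃ C, ∀ {c : ℂ} {b : ℝ}, b₀ ≤ |b| → |b| ≤ b₁ → ‖c‖ ≤ T →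
      ∀ ζ, bubbleDensity c b ζ ≤ C / (1 + ‖ζ‖) ^ 4 := by
  refine ⟨4 * b₁ ^ 2 * (2 + 2 * (1 + T) ^ 2 / b₀ ^ 2) ^ 2, fun {c b} hb hb₁ hc ζ => ?_⟩
  set x := ‖ζ + c‖
  have hT : 0 ≤ T := (norm_nonneg c).trans hc
  have hζ : 1 + ‖ζ‖ ≤ (1 + T) + x := by
    have := norm_sub_le (ζ + c) c
    rw [add_sub_cancel_right] at this
    linarith
  have hb_sq : b₀ ^ 2 ≤ b ^ 2 := by rw [← sq_abs b]; gcongr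
  have hT_le : 2 * (1 + T) ^ 2 ≤ 2 * (1 + T) ^ 2 / b₀ ^ 2 * b ^ 2 := by
    rw [div_mul_eq_mul_div, le_div_iff₀ (by positivity)]; gcongr
  have hK : (1 + ‖ζ‖) ^ 2 ≤ (2 + 2 * (1 + T) ^ 2 / b₀ ^ 2) * (x ^ 2 + b ^ 2) :=
    calc (1 + ‖ζ‖) ^ 2 ≤ ((1 + T) + x) ^ 2 := by gcongr
      _ ≤ 2 * (1 + T) ^ 2 + 2 * x ^ 2 := by nlinarith [sq_nonneg (1 + T - x)]
      _ ≤ (2 + 2 * (1 + T) ^ 2 / b₀ ^ 2) * (x ^ 2 + b ^ 2) := by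
        nlinarith [mul_nonneg (by positivity : 0 ≤ 2 * (1 + T) ^ 2 / b₀ ^ 2) (sq_nonneg x)]
  have hden : 0 < x ^ 2 + b ^ 2 := by nlinarith [sq_nonneg x]
  rw [bubbleDensity, Complex.normSq_eq_norm_sq, div_le_div_iff₀ (by positivity) (by positivity)]
  calc 4 * b ^ 2 * (1 + ‖ζ‖) ^ 4 = 4 * |b| ^ 2 * ((1 + ‖ζ‖) ^ 2) ^ 2 := by rw [sq_abs]; ring
    _ ≤ 4 * b₁ ^ 2 * ((2 + 2 * (1 + T) ^ 2 / b₀ ^ 2) * (x ^ 2 + b ^ 2)) ^ 2 := by gcongr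
    _ = 4 * b₁ ^ 2 * (2 + 2 * (1 + T) ^ 2 / b₀ ^ 2) ^ 2 * (x ^ 2 + b ^ 2) ^ 2 := by ring

theorem integrable_bubbleDensity (c : ℂ) {b : ℝ} (hb : b ≠ 0) :
    Integrable (bubbleDensity c b) := by
  obtain ⟨C, hC⟩ := exists_bubbleDensity_le (abs_pos.mpr hb) |b| ‖c‖
  refine (integrable_div_one_add_norm_pow_four C).mono'
    (measurable_bubbleDensity c b).aestronglyMeasurable (ae_of_all _ fun ζ => ?_)
  rw [Real.norm_of_nonneg (bubbleDensity_nonneg c b ζ)]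
  exact hC le_rfl le_rfl le_rfl ζ

theorem tendsto_bubbleDensity {ι : Type*} {l : Filter ι} {c : ι → ℂ} {b : ι → ℝ} {c₀ : ℂ} {b₀ : ℝ}
    (hc : Tendsto c l (𝓝 c₀)) (hb : Tendsto b l (𝓝 b₀)) (hb₀ : b₀ ≠ 0) (ζ : ℂ) :
    Tendsto (fun k => bubbleDensity (c k) (b k) ζ) l (𝓝 (bubbleDensity c₀ b₀ ζ)) := by
  have hN := ((Complex.continuous_normSq.tendsto _).comp
    ((tendsto_const_nhds (x := ζ)).add hc)).add (hb.pow 2)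
  have hpos : 0 < Complex.normSq (ζ + c₀) + b₀ ^ 2 :=
    add_pos_of_nonneg_of_pos (Complex.normSq_nonneg _) (by positivity)
  exact ((hb.pow 2).const_mul 4).div (hN.pow 2) (pow_ne_zero 2 hpos.ne')

theorem tendsto_setIntegral_annulus_bubbleDensity {ι : Type*} {l : Filter ι}
    [l.IsCountablyGenerated] {c : ι → ℂ} {b r : ι → ℝ} {c₀ : ℂ} {b₀ : ℝ}
    (hc : Tendsto c l (𝓝 c₀)) (hb : Tendsto b l (𝓝 b₀)) (hb₀ : b₀ ≠ 0)
    (hr : Tendsto r l atTop) (L : ℝ) :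
    Tendsto (fun k => ∫ ζ in ball 0 (r k) \ ball 0 L, bubbleDensity (c k) (b k) ζ) l
      (𝓝 (∫ ζ in (ball 0 L)ᶜ, bubbleDensity c₀ b₀ ζ)) := by
  have hb₀' : 0 < |b₀| := abs_pos.mpr hb₀
  obtain ⟨C, hC⟩ := exists_bubbleDensity_le (half_pos hb₀') (2 * |b₀|) (‖c₀‖ + 1)
  have hb_mem : ∀ᶠ k in l, |b k| ∈ Set.Icc (|b₀| / 2) (2 * |b₀|) :=
    hb.abs.eventually (Icc_mem_nhds (by linarith) (by linarith))
  have hc_le : ∀ᶠ k in l, ‖c k‖ ≤ ‖c₀‖ + 1 := hc.norm.eventually (ge_mem_nhds (lt_add_one _))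
  refine tendsto_setIntegral_of_dominated_of_eventually_mem_iff
    (fun k => measurableSet_ball.diff measurableSet_ball) measurableSet_ball.compl
    (Eventually.of_forall fun k => (measurable_bubbleDensity _ _).aestronglyMeasurable)
    (integrable_div_one_add_norm_pow_four C) ?_
    (fun ζ _ => tendsto_bubbleDensity hc hb hb₀ ζ) fun ζ => ?_
  · filter_upwards [hb_mem, hc_le] with k hbk hck
    refine ae_of_all _ fun ζ => ?_
    rw [Real.norm_of_nonneg (bubbleDensity_nonneg _ _ ζ)]
    exact hC hbk.1 hbk.2 hck ζ
  · filter_upwards [hr.eventually_gt_atTop ‖ζ‖] with k hk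
    simp [hk]

theorem stmt_19_general (zs : ℕ → ℂ) (as Rs : ℕ → ℝ) (s a : ℝ)
    (hRs : ∀ k, 0 < Rs k)
    (hR0 : Tendsto Rs atTop (nhds 0))
    (hzs : Tendsto (fun k => ‖zs k‖ / Rs k) atTop (nhds s))
    (haa : Tendsto (fun k => as k / Rs k) atTop (nhds a))
    (ha : 0 < a) (ρ : ℝ) (hρ : 0 < ρ) :
    ∃ g : ℝ → ℝ,
      (∀ L : ℝ, 0 < L →
        Tendsto (fun k =>
            ∫ z in Metric.ball (0 : ℂ) ρ \ Metric.ball (0 : ℂ) (Rs k * L),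
              (1 / 2) * PsiGradSq (zs k) (as k) z)
          atTop (nhds (g L))) ∧
      Tendsto g atTop (nhds 0) := by
  refine ⟨fun L => ∫ ζ in (ball 0 L)ᶜ, bubbleDensity s a ζ, fun L _ => ?_,
    tendsto_setIntegral_compl_ball_atTop (integrable_bubbleDensity _ ha.ne') 0⟩
  have hR : Tendsto Rs atTop (𝓝[>] 0) := tendsto_nhdsWithin_iff.mpr ⟨hR0, .of_forall hRs⟩
  have hρR : Tendsto (fun k => ρ / Rs k) atTop atTop := by
    simpa [div_eq_mul_inv] using hR.inv_tendsto_nhdsGT_zero.const_mul_atTop hρ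
  refine (tendsto_setIntegral_annulus_bubbleDensity ((Complex.continuous_ofReal.tendsto s).comp hzs)
    haa ha.ne' hρR L).congr fun k => ?_
  exact (setIntegral_annulus_half_psiGradSq _ _ (hRs k) ρ L).symm

/-- no neck energy for the harmonic bubbles
`Ψ_k = Φ ∘ ((z + z_k - a_k)/(z + z_k + a_k))`: if `R_k → 0`, `|z_k|/R_k → s ∈ [0,∞)`
and `a_k/R_k → a ∈ (0,∞)`, then for every `ρ > 0`,
`lim_{L→∞} lim_{k→∞} ∫_{D_ρ \ D_{R_k L}} (1/2)|∇Ψ_k|² = 0`. -/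
theorem stmt_19 (zs : ℕ → ℂ) (as Rs : ℕ → ℝ) (s a : ℝ)
    (has : ∀ k, 0 < as k) (hRs : ∀ k, 0 < Rs k)
    (hR0 : Tendsto Rs atTop (nhds 0))
    (hzs : Tendsto (fun k => ‖zs k‖ / Rs k) atTop (nhds s))
    (haa : Tendsto (fun k => as k / Rs k) atTop (nhds a))
    (hs : 0 ≤ s) (ha : 0 < a) (ρ : ℝ) (hρ : 0 < ρ) :
    ∃ g : ℝ → ℝ,
      (∀ L : ℝ, 0 < L →
        Tendsto (fun k =>
            ∫ z in Metric.ball (0 : ℂ) ρ \ Metric.ball (0 : ℂ) (Rs k * L),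
              (1 / 2) * PsiGradSq (zs k) (as k) z)
          atTop (nhds (g L))) ∧
      Tendsto g atTop (nhds 0) :=
  stmt_19_general zs as Rs s a hRs hR0 hzs haa ha ρ hρ
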